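/- Fix ε ∈ (0,1/16), θ ∈ (ε,1/16), and let N = ⌊εL⌋, Λ_L = 𝒮_{L,M}(θ) with M = ⌊(L−1)/2⌋. There exists L₀ = L₀(ε) such that for all L ≥ L₀, all n with N/2 < n < N, and all x ∈ 𝒱_L^N with d_L^N(x, 𝒱_{L,1}^N) < L^{3/2} and |x ∩ Λ_L| = n: every center of a closest droplet lies in the sector 𝒮_{L,M}(θ + ε), i.e. 𝒲_L(x) ⊆ 𝒮_{L,M}(θ + ε), and moreover for every m ∈ 𝒲_L(x) the droplet c_{L,m}^N is contained in 𝒮_{L,M}(θ + 2ε). -/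

import Mathlib

open Finset
open scoped Classical
open Fin.NatCast

noncomputable section

/-- Distance on the cycle `ℤ/L`. -/
def cycDist {L : ℕ} (a b : Fin L) : ℕ := min (a - b).val (b - a).val

/-- Hard-core configuration graph: an edge moves one particle to a free neighbouring site. -/
def hcGraph (L : ℕ) [NeZero L] : SimpleGraph (Finset (Fin L)) where
  Adj x y := x.card = y.card ∧ ∃ j : Fin L, symmDiff x y = {j, j + ((1 : ℕ) : Fin L)}
  symm := by
    constructor
    rintro x y ⟨h1, j, h2⟩
    refine ⟨h1.symm, j, ?_⟩
    rw [symmDiff_comm]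
    exact h2
  loopless := by
    constructor
    rintro x ⟨-, j, h2⟩
    have hj : j ∈ symmDiff x x := by rw [h2]; simp
    rw [symmDiff_self] at hj
    simp at hj

/-- Graph distance `d_L^N` on the hard-core configuration graph. -/
def dN (L : ℕ) [NeZero L] (x y : Finset (Fin L)) : ℕ := (hcGraph L).dist x y

/-- The droplet (cluster of `N` consecutive sites) centred at `m`. -/
def droplet (L N : ℕ) [NeZero L] (m : Fin L) : Finset (Fin L) :=
  (Finset.range N).image fun i => m - (((N - 1) / 2 : ℕ) : Fin L) + (i : Fin L)

def isDroplet (L N : ℕ) [NeZero L] (c : Finset (Fin L)) : Prop := ∃ m : Fin L, c = droplet L N m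

/-- Distance to the set of droplet configurations. -/
def distDrop (L N : ℕ) [NeZero L] (x : Finset (Fin L)) : ℕ :=
  sInf (Set.range fun m : Fin L => dN L x (droplet L N m))

/-- Centres of droplets closest to `x`. -/
def WL (L N : ℕ) [NeZero L] (x : Finset (Fin L)) : Set (Fin L) :=
  {m : Fin L | dN L x (droplet L N m) = distDrop L N x}

/-- A path of length `k` from `x` to `y` in the configuration graph. -/
def IsPathN (L : ℕ) [NeZero L] (u : ℕ → Finset (Fin L)) (k : ℕ) (x y : Finset (Fin L)) : Prop :=
  u 0 = x ∧ u k = y ∧ ∀ l < k, (hcGraph L).Adj (u l) (u (l + 1))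

/-- The particle-tracking of a path: the labelled positions `ũ`. -/
def IsTracking (L N : ℕ) [NeZero L] (u : ℕ → Finset (Fin L)) (k : ℕ) (ut : ℕ → Fin N → Fin L) : Prop :=
  StrictMono (ut 0) ∧
  (∀ l ≤ k, u l = Finset.image (ut l) Finset.univ) ∧
  ∀ l < k, ∀ j : Fin N, (ut l j ∈ u (l + 1) → ut (l + 1) j = ut l j) ∧
    (ut l j ∉ u (l + 1) → ut (l + 1) j ∈ u (l + 1) \ u l)

/-- `L_j^u` : distance travelled by particle `j` along the tracked path. -/
def travel {L N : ℕ} (ut : ℕ → Fin N → Fin L) (k : ℕ) (j : Fin N) : ℕ :=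
  ∑ l ∈ Finset.range k, cycDist (ut l j) (ut (l + 1) j)

/-- `I_-^u` : particles moving counter-clockwise. -/
def Iminus {L N : ℕ} [NeZero L] (ut : ℕ → Fin N → Fin L) (k : ℕ) (j : Fin N) : Prop :=
  travel ut k j ≠ 0 ∧ ∃ l ≤ k, ut l j = ut 0 j - ((1 : ℕ) : Fin L)

/-- `I_+^u` : particles moving clockwise. -/
def Iplus {L N : ℕ} [NeZero L] (ut : ℕ → Fin N → Fin L) (k : ℕ) (j : Fin N) : Prop :=
  travel ut k j ≠ 0 ∧ ∃ l ≤ k, ut l j = ut 0 j + ((1 : ℕ) : Fin L)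

/-- `I_0^u` : particles that do not move. -/
def I0 {L N : ℕ} (ut : ℕ → Fin N → Fin L) (k : ℕ) (j : Fin N) : Prop := travel ut k j = 0

/-- The midpoint `M = ⌊(L-1)/2⌋` of the cycle. -/
def midL (L : ℕ) [NeZero L] : Fin L := (((L - 1) / 2 : ℕ) : Fin L)

/-- The sector of size `θ` around `m`, as a set. -/
def sector (L : ℕ) [NeZero L] (m : Fin L) (θ : ℝ) : Set (Fin L) :=
  {k : Fin L | (cycDist k m : ℝ) < θ * L}

/-- The sector of size `θ` around `m`, as a finset. -/
def secF (L : ℕ) [NeZero L] (m : Fin L) (θ : ℝ) : Finset (Fin L) :=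
  Finset.univ.filter fun k => (cycDist k m : ℝ) < θ * L

/-- `N(ε,L) = ⌊εL⌋`, the particle number. -/
def NL (ε : ℝ) (L : ℕ) : ℕ := ⌊ε * (L : ℝ)⌋₊

/-- Number of sites strictly within distance `θL` of the midpoint (on one side). -/
def sP (L : ℕ) (θ : ℝ) : ℕ := ⌈θ * (L : ℝ)⌉₊ - 1

/-- `λ₊`, the right endpoint of the sector `Λ_L = 𝒮_{L,M}(θ)`. -/
def lamP (L : ℕ) [NeZero L] (θ : ℝ) : Fin L := midL L + ((sP L θ : ℕ) : Fin L)

/-- `λ₋`, the left endpoint of the sector `Λ_L = 𝒮_{L,M}(θ)`. -/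
def lamM (L : ℕ) [NeZero L] (θ : ℝ) : Fin L := midL L - ((sP L θ : ℕ) : Fin L)

/-- `a₊,j = λ₊ + j`. -/
def aP (L : ℕ) [NeZero L] (θ : ℝ) (j : ℕ) : Fin L := lamP L θ + ((j : ℕ) : Fin L)

/-- `a₋,j = λ₋ - j`. -/
def aM (L : ℕ) [NeZero L] (θ : ℝ) (j : ℕ) : Fin L := lamM L θ - ((j : ℕ) : Fin L)

/-- `y₊ⁿ = λ₊ - {0,…,n-1}`, the cluster attached to the right boundary of `Λ_L`. -/
def yP (L : ℕ) [NeZero L] (θ : ℝ) (n : ℕ) : Finset (Fin L) :=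
  (Finset.range n).image fun i => lamP L θ - ((i : ℕ) : Fin L)

/-- `y₋ⁿ = λ₋ + {0,…,n-1}`, the cluster attached to the left boundary of `Λ_L`. -/
def yM (L : ℕ) [NeZero L] (θ : ℝ) (n : ℕ) : Finset (Fin L) :=
  (Finset.range n).image fun i => lamM L θ + ((i : ℕ) : Fin L)

/-- The function `h_L^n` of the paper. -/
def hfun (L : ℕ) [NeZero L] (θ : ℝ) (n : ℕ) (y : Finset (Fin L)) : ℝ :=
  if y = yP L θ n ∨ y = yM L θ n then 0
  else
    min (min (distDrop L (n + 1) (insert (aP L θ 1) y) : ℝ)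
          (distDrop L (n + 1) (insert (aM L θ 1) y) : ℝ))
        ((L : ℝ) ^ ((5 : ℝ) / 4)) - 1


/-! If a closest droplet `c_{L,m}^N` had its centre at distance `≥ (θ + ε) L` from `M`, the
potential `g k = (d(m, M) - N / 2 - d(k, M))⁺` would vanish on the droplet, change by at most one
along each edge of the hard-core graph, and be at least `ε L / 2` at each of the `n > ε L / 2`
particles of `x` in `Λ_L`. So `d_L^N(x, c_{L,m}^N) ≥ (ε L / 2)²`, which exceeds `L^{3/2}` once
`L ≥ 16 / ε⁴`. The droplet, of radius `N / 2 ≤ ε L / 2`, then lies in `𝒮_{L,M}(θ + 2ε)`.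

`SimpleGraph.dist` is `0` between unreachable vertices, so the argument needs the hard-core graph
on `N`-subsets to be connected when `2N < L`: choose a site `z` free in both configurations; moving
particles towards `z` lowers `∑ (k - z)`, and the only configuration without such a move is the
block of `N` sites following `z`. -/

open Fin.CommRing

lemma Fin.val_sub_eq_ite {L : ℕ} (a b : Fin L) :
    (a - b).val = if b ≤ a then a.val - b.val else L + a.val - b.val := by
  split_ifs with h
  · exact Fin.sub_val_of_le h
  · exact Fin.coe_sub_iff_lt.mpr (not_le.mp h)

section cycDist

variable {L : ℕ}

lemma cycDist_comm (a b : Fin L) : cycDist a b = cycDist b a := min_comm _ _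

lemma cycDist_triangle (a b c : Fin L) : cycDist a c ≤ cycDist a b + cycDist b c := by
  have := a.isLt; have := b.isLt; have := c.isLt
  simp only [cycDist, Fin.val_sub_eq_ite, Fin.le_def]
  split_ifs <;> omega

variable [NeZero L]

lemma cycDist_self (a : Fin L) : cycDist a a = 0 := by simp [cycDist]

lemma cycDist_add_left (a b c : Fin L) : cycDist (c + a) (c + b) = cycDist a b := by
  simp only [cycDist, add_sub_add_left_eq_sub]

lemma cycDist_self_add_one (a : Fin L) : cycDist a (a + 1) ≤ 1 :=
  calc cycDist a (a + 1) ≤ (a + 1 - a).val := min_le_right _ _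
    _ ≤ 1 := by rw [add_sub_cancel_left, Fin.val_one']; exact Nat.mod_le 1 L

lemma cycDist_le_one_of_mem_pair {j a b : Fin L} (ha : a ∈ ({j, j + 1} : Finset (Fin L)))
    (hb : b ∈ ({j, j + 1} : Finset (Fin L))) : cycDist a b ≤ 1 := by
  simp only [mem_insert, mem_singleton] at ha hb
  rcases ha with rfl | rfl <;> rcases hb with rfl | rfl <;>
    simp [cycDist_self, cycDist_self_add_one, cycDist_comm (_ + 1)]

end cycDist

section droplet

variable {L N : ℕ} [NeZero L]

lemma droplet_eq_image (N : ℕ) (m : Fin L) :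
    droplet L N m =
      (range N).image fun i : ℕ => m - (((N - 1) / 2 : ℕ) : Fin L) + (i : Fin L) := by
  simp only [droplet, bind_pure_comp, Finset.fmap_def, Finset.image_image]
  congr

lemma card_droplet (hN : N ≤ L) (m : Fin L) : (droplet L N m).card = N := by
  rw [droplet_eq_image, card_image_of_injOn, card_range]
  intro i hi i' hi' h
  simp only [coe_range, Set.mem_Iio] at hi hi'
  have := congrArg Fin.val (add_left_cancel h)
  rwa [Fin.val_cast_of_lt (by omega), Fin.val_cast_of_lt (by omega)] at this

lemma two_mul_cycDist_le_of_mem_droplet (hN : N ≤ L) {m k : Fin L} (hk : k ∈ droplet L N m) :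
    2 * cycDist k m ≤ N := by
  rw [droplet_eq_image, mem_image] at hk
  obtain ⟨i, hi, rfl⟩ := hk
  rw [mem_range] at hi
  set h := (N - 1) / 2
  calc 2 * cycDist (m - (h : Fin L) + (i : Fin L)) m
        = 2 * cycDist (m - (h : Fin L) + (i : Fin L)) (m - (h : Fin L) + (h : Fin L)) := by
          rw [sub_add_cancel]
    _ = 2 * cycDist (i : Fin L) (h : Fin L) := by rw [cycDist_add_left]
    _ ≤ N := by
      simp only [cycDist, Fin.val_sub_eq_ite, Fin.le_def,
        Fin.val_cast_of_lt (by omega : i < L), Fin.val_cast_of_lt (by omega : h < L)]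
      split_ifs <;> omega

end droplet

lemma Finset.symmDiff_insert_erase {α : Type*} [DecidableEq α] {s : Finset α} {a b : α}
    (ha : a ∈ s) (hb : b ∉ s) : symmDiff s (insert b (s.erase a)) = {a, b} := by
  ext c
  rw [mem_symmDiff]
  simp only [mem_insert, mem_erase]
  by_cases h1 : c = a <;> by_cases h2 : c = b <;> simp_all

section potential

variable {L : ℕ} [NeZero L] {u v : Finset (Fin L)}

lemma exists_sdiff_eq_singleton_of_hcGraph_adj (h : (hcGraph L).Adj u v) :
    ∃ a b, u \ v = {a} ∧ v \ u = {b} ∧ cycDist a b ≤ 1 := by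
  obtain ⟨hcard, j, hj⟩ := h
  rw [symmDiff_def, sup_eq_union, Nat.cast_one] at hj
  have hcomm : #(u \ v) = #(v \ u) := card_sdiff_comm hcard
  have hunion : #(u \ v ∪ v \ u) = #(u \ v) + #(v \ u) :=
    card_union_of_disjoint disjoint_sdiff_sdiff
  have hpos : 0 < #(u \ v ∪ v \ u) := card_pos.mpr ⟨j, by simp [hj]⟩
  have hle : #(u \ v ∪ v \ u) ≤ 2 := hj ▸ card_le_two
  obtain ⟨a, ha⟩ := card_eq_one.mp (show #(u \ v) = 1 by omega)
  obtain ⟨b, hb⟩ := card_eq_one.mp (show #(v \ u) = 1 by omega)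
  refine ⟨a, b, ha, hb, cycDist_le_one_of_mem_pair (j := j) ?_ ?_⟩ <;> simp [← hj, ha, hb]

variable (g : Fin L → ℝ)

lemma sum_le_sum_add_one_of_hcGraph_adj (hg : ∀ a b, g a ≤ g b + cycDist a b)
    (h : (hcGraph L).Adj u v) : ∑ k ∈ u, g k ≤ ∑ k ∈ v, g k + 1 := by
  obtain ⟨a, b, ha, hb, hab⟩ := exists_sdiff_eq_singleton_of_hcGraph_adj h
  have hu := sum_inter_add_sum_sdiff u v g
  have hv := sum_inter_add_sum_sdiff v u g
  rw [ha, sum_singleton] at hu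
  rw [hb, sum_singleton, inter_comm] at hv
  have hab' : (cycDist a b : ℝ) ≤ 1 := by exact_mod_cast hab
  linarith [hg a b]

lemma sum_le_sum_add_length (hg : ∀ a b, g a ≤ g b + cycDist a b) {x y : Finset (Fin L)}
    (p : (hcGraph L).Walk x y) : ∑ k ∈ x, g k ≤ ∑ k ∈ y, g k + p.length := by
  induction p with
  | nil => simp
  | cons h p ih =>
    rw [SimpleGraph.Walk.length_cons]
    push_cast
    linarith [sum_le_sum_add_one_of_hcGraph_adj g hg h]

lemma sum_le_sum_add_dN (hg : ∀ a b, g a ≤ g b + cycDist a b) {x y : Finset (Fin L)}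
    (hxy : (hcGraph L).Reachable x y) : ∑ k ∈ x, g k ≤ ∑ k ∈ y, g k + dN L x y := by
  obtain ⟨p, hp⟩ := hxy.exists_walk_length_eq_dist
  rw [dN, ← hp]
  exact sum_le_sum_add_length g hg p

end potential

lemma SimpleGraph.exists_reachable_forall_adj_le {V : Type*} (G : SimpleGraph V) (S : Set V)
    (φ : V → ℕ) {v : V} (hv : v ∈ S) :
    ∃ w ∈ S, G.Reachable v w ∧ ∀ w' ∈ S, G.Adj w w' → φ w ≤ φ w' := by
  induction hφ : φ v using Nat.strong_induction_on generalizing v with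
  | _ k ih =>
    by_cases hmin : ∀ w' ∈ S, G.Adj v w' → φ v ≤ φ w'
    · exact ⟨v, hv, .rfl, hmin⟩
    · push Not at hmin
      obtain ⟨w, hw, hvw, hlt⟩ := hmin
      obtain ⟨u, hu, hwu, humin⟩ := ih (φ w) (hφ ▸ hlt) hw rfl
      exact ⟨u, hu, hvw.reachable.trans hwu, humin⟩

lemma Finset.eq_Icc_one_card_of_pred_mem {S : Finset ℕ} (h0 : 0 ∉ S)
    (hpred : ∀ s ∈ S, 2 ≤ s → s - 1 ∈ S) : S = Icc 1 #S := by
  have hdown : ∀ d, ∀ s ∈ S, d < s → s - d ∈ S := by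
    intro d
    induction d with
    | zero => simpa using fun s hs _ => hs
    | succ d ih =>
      intro s hs hds
      simpa [Nat.sub_sub] using hpred (s - d) (ih s hs (by omega)) (by omega)
  have hsub : S ⊆ Icc 1 #S := by
    intro s hs
    have hs0 : s ≠ 0 := fun h => h0 (h ▸ hs)
    have hIcc : Icc 1 s ⊆ S := fun t ht => by
      rw [mem_Icc] at ht
      simpa [show s - (s - t) = t by omega] using hdown (s - t) s hs (by omega)
    have := card_le_card hIcc
    rw [Nat.card_Icc] at this
    rw [mem_Icc]
    omega
  exact eq_of_subset_of_card_le hsub (by rw [Nat.card_Icc]; omega)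

section reachable

variable {L : ℕ} [NeZero L]

lemma Fin.injective_sub_val (z : Fin L) : Function.Injective fun k : Fin L => (k - z).val :=
  fun _ _ h => sub_left_injective (Fin.val_injective h)

lemma image_sub_val_eq_Icc_of_forall_adj_le {z : Fin L} {x : Finset (Fin L)} (hz : z ∉ x)
    (hmin : ∀ x', #x' = #x → z ∉ x' → (hcGraph L).Adj x x' →
      ∑ k ∈ x, (k - z).val ≤ ∑ k ∈ x', (k - z).val) :
    x.image (fun k => (k - z).val) = Icc 1 #x := by
  rw [← card_image_of_injective x (Fin.injective_sub_val z)]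
  refine Finset.eq_Icc_one_card_of_pred_mem ?_ ?_
  · simp only [mem_image, not_exists, not_and]
    intro k hk hkz
    exact hz (sub_eq_zero.mp (Fin.ext hkz) ▸ hk)
  · simp only [mem_image, forall_exists_index, and_imp]
    rintro _ k hk rfl h2
    by_contra hgap
    have hb : (k - 1 - z).val = (k - z).val - 1 := by
      have hone : (1 : Fin L).val = 1 := by
        rw [Fin.val_one', Nat.one_mod_eq_one]
        have := (k - z).isLt
        omega
      rw [sub_right_comm, Fin.sub_val_of_le (by rw [Fin.le_def, hone]; omega), hone]
    have hbx : k - 1 ∉ x := fun h => hgap ⟨k - 1, h, hb⟩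
    have hbz : k - 1 ≠ z := by
      intro h
      rw [h, sub_self, Fin.val_zero] at hb
      omega
    have hx'card : #(insert (k - 1) (x.erase k)) = #x := by
      rw [card_insert_of_notMem (fun h => hbx (mem_of_mem_erase h)), card_erase_add_one hk]
    have hadj : (hcGraph L).Adj x (insert (k - 1) (x.erase k)) :=
      ⟨hx'card.symm, k - 1, by
        rw [symmDiff_insert_erase hk hbx, pair_comm, Nat.cast_one, sub_add_cancel]⟩
    have hle := hmin _ hx'card (by simp [hbz.symm, hz]) hadj
    rw [sum_insert (fun h => hbx (mem_of_mem_erase h)), hb, ← sum_erase_add x _ hk] at hle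
    omega

lemma hcGraph_reachable {x y : Finset (Fin L)} (hxy : #x = #y) (hL : 2 * #x < L) :
    (hcGraph L).Reachable x y := by
  obtain ⟨z, -, hz⟩ := exists_mem_notMem_of_card_lt_card (s := x ∪ y) (t := univ)
    (by rw [card_univ, Fintype.card_fin]; linarith [card_union_le x y])
  rw [mem_union, not_or] at hz
  let S : Set (Finset (Fin L)) := {x' | #x' = #x ∧ z ∉ x'}
  let φ : Finset (Fin L) → ℕ := fun x' => ∑ k ∈ x', (k - z).val
  have hlocal : ∀ x₀ ∈ S, (∀ x' ∈ S, (hcGraph L).Adj x₀ x' → φ x₀ ≤ φ x') →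
      x₀.image (fun k => (k - z).val) = Icc 1 #x := by
    rintro x₀ ⟨hcard, hz₀⟩ hmin
    rw [← hcard]
    exact image_sub_val_eq_Icc_of_forall_adj_le hz₀
      fun x' hx' hzx' hadj => hmin x' ⟨hx'.trans hcard, hzx'⟩ hadj
  obtain ⟨x₀, hx₀, hxx₀, hx₀min⟩ :=
    (hcGraph L).exists_reachable_forall_adj_le S φ (v := x) ⟨rfl, hz.1⟩
  obtain ⟨y₀, hy₀, hyy₀, hy₀min⟩ :=
    (hcGraph L).exists_reachable_forall_adj_le S φ (v := y) ⟨hxy.symm, hz.2⟩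
  have hx₀y₀ : x₀ = y₀ := image_injective (Fin.injective_sub_val z)
    ((hlocal x₀ hx₀ hx₀min).trans (hlocal y₀ hy₀ hy₀min).symm)
  exact hxx₀.trans (hx₀y₀ ▸ hyy₀.symm)

end reachable

lemma card_inter_secF_mul_le_dN {L N : ℕ} [NeZero L] {x : Finset (Fin L)} (hx : #x = N)
    (hN : 2 * N < L) (M m : Fin L) (θ : ℝ) :
    #(x ∩ secF L M θ) * (cycDist m M - N / 2 - θ * L : ℝ) ≤ dN L x (droplet L N m) := by
  set ρ : ℝ := cycDist m M - N / 2 with hρ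
  set g : Fin L → ℝ := fun k => max 0 (ρ - cycDist k M)
  have hg : ∀ a b, g a ≤ g b + cycDist a b := by
    intro a b
    have h : (cycDist b M : ℝ) ≤ cycDist a b + cycDist a M := by
      exact_mod_cast (cycDist_triangle b a M).trans_eq (by rw [cycDist_comm b a])
    exact max_le (by positivity) (by linarith [le_max_right 0 (ρ - cycDist b M)])
  have hdrop : ∀ k ∈ droplet L N m, g k = 0 := by
    intro k hk
    have h1 : (2 * cycDist k m : ℝ) ≤ N := by
      exact_mod_cast two_mul_cycDist_le_of_mem_droplet (by omega) hk
    have h2 : (cycDist m M : ℝ) ≤ cycDist k m + cycDist k M := by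
      exact_mod_cast (cycDist_triangle m k M).trans_eq (by rw [cycDist_comm m k])
    exact max_eq_left (by rw [hρ]; linarith)
  have hsec : ∀ k ∈ x ∩ secF L M θ, ρ - θ * L ≤ g k := by
    intro k hk
    have hk' : (cycDist k M : ℝ) < θ * L := (mem_filter.mp (mem_inter.mp hk).2).2
    exact (by linarith : ρ - θ * L ≤ ρ - cycDist k M).trans (le_max_right _ _)
  have hreach : (hcGraph L).Reachable x (droplet L N m) :=
    hcGraph_reachable (by rw [hx, card_droplet (by omega)]) (by omega)
  calc #(x ∩ secF L M θ) * (ρ - θ * L) ≤ ∑ k ∈ x ∩ secF L M θ, g k := by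
        simpa using card_nsmul_le_sum _ g _ hsec
    _ ≤ ∑ k ∈ x, g k :=
        sum_le_sum_of_subset_of_nonneg inter_subset_left fun _ _ _ => le_max_left _ _
    _ ≤ ∑ k ∈ droplet L N m, g k + dN L x (droplet L N m) := sum_le_sum_add_dN g hg hreach
    _ = dN L x (droplet L N m) := by rw [sum_eq_zero hdrop, zero_add]

lemma rpow_three_halves_le_mul_sq {c t : ℝ} (hc : 0 < c) (ht : 1 / c ^ 2 ≤ t) :
    t ^ (3 / 2 : ℝ) ≤ c * t ^ 2 := by
  have ht0 : 0 ≤ t := le_trans (by positivity) ht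
  have hsqrt : 1 ≤ c * √t := by
    rw [← Real.sqrt_sq hc.le, ← Real.sqrt_mul (sq_nonneg c)]
    exact Real.one_le_sqrt.mpr (by rwa [div_le_iff₀ (by positivity), mul_comm] at ht)
  have h32 : t ^ (3 / 2 : ℝ) = t * √t := by
    rw [Real.sqrt_eq_rpow, ← Real.rpow_one_add' ht0 (by norm_num)]
    norm_num
  calc t ^ (3 / 2 : ℝ) = t * √t := h32
    _ ≤ t * √t * (c * √t) := le_mul_of_one_le_right (by positivity) hsqrt
    _ = c * t ^ 2 := by rw [mul_mul_mul_comm, Real.mul_self_sqrt ht0]; ring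

section sector

variable {L N : ℕ} [NeZero L] {M m : Fin L}

lemma mem_sector_of_mem_WL {x : Finset (Fin L)} {θ ε : ℝ} (hε : 0 < ε) (hx : #x = N)
    (hN : 2 * N < L) (hNε : (N : ℝ) ≤ ε * L) (hn : ε * L < 2 * #(x ∩ secF L M θ))
    (hdist : (distDrop L N x : ℝ) < (ε * L / 2) ^ 2) (hm : m ∈ WL L N x) :
    m ∈ sector L M (θ + ε) := by
  by_contra hfar
  rw [sector, Set.mem_ofPred_eq, not_lt] at hfar
  have hcost := card_inter_secF_mul_le_dN hx hN M m θ
  rw [hm] at hcost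
  have hεL : 0 < ε * L := mul_pos hε (by exact_mod_cast NeZero.pos L)
  have hgap : ε * L / 2 ≤ (cycDist m M : ℝ) - N / 2 - θ * L := by linarith
  have : (ε * L / 2) ^ 2 < #(x ∩ secF L M θ) * (ε * L / 2) := by
    rw [sq]; exact mul_lt_mul_of_pos_right (by linarith) (by positivity)
  linarith [mul_le_mul_of_nonneg_left hgap (Nat.cast_nonneg #(x ∩ secF L M θ))]

lemma droplet_subset_sector {θ θ' : ℝ} (hN : N ≤ L) (hθθ' : θ * L + N / 2 ≤ θ' * L)
    (hm : m ∈ sector L M θ) : ∀ j ∈ droplet L N m, j ∈ sector L M θ' := by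
  intro j hj
  have h1 : (cycDist j M : ℝ) ≤ cycDist j m + cycDist m M := by
    exact_mod_cast cycDist_triangle _ _ _
  have h2 : (2 * cycDist j m : ℝ) ≤ N := by
    exact_mod_cast two_mul_cycDist_le_of_mem_droplet hN hj
  have h3 : (cycDist m M : ℝ) < θ * L := hm
  show (cycDist j M : ℝ) < θ' * L
  linarith

end sector

theorem closest_centres_in_sector_general (ε θ : ℝ)
    (hε : 0 < ε) (hε' : ε < 1 / 16) :
    ∃ L₀ : ℕ, ∀ (L : ℕ) [NeZero L], L₀ ≤ L →
      ∀ n : ℕ, NL ε L < 2 * n → n < NL ε L →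
      ∀ x : Finset (Fin L), x.card = NL ε L →
      (distDrop L (NL ε L) x : ℝ) < (L : ℝ) ^ ((3 : ℝ) / 2) →
      (x ∩ secF L (midL L) θ).card = n →
      (∀ m ∈ WL L (NL ε L) x, m ∈ sector L (midL L) (θ + ε)) ∧
      (∀ m ∈ WL L (NL ε L) x, ∀ j ∈ droplet L (NL ε L) m,
        j ∈ sector L (midL L) (θ + 2 * ε)) := by
  refine ⟨⌈16 / ε ^ 4⌉₊, fun L _ hL n hNn _ x hx hdist hxn => ?_⟩
  set N := NL ε L
  have hNle : (N : ℝ) ≤ ε * L := Nat.floor_le (by positivity)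
  have hLpos : (0 : ℝ) < L := by exact_mod_cast NeZero.pos L
  have h2N : 2 * N < L := by exact_mod_cast (by nlinarith : (2 * N : ℝ) < L)
  have hn : ε * L < 2 * n := by
    have hNgt : ε * L < N + 1 := Nat.lt_floor_add_one _
    have : (N : ℝ) + 1 ≤ 2 * n := by exact_mod_cast hNn
    linarith
  have hL₀ : (L : ℝ) ^ (3 / 2 : ℝ) ≤ (ε * L / 2) ^ 2 := by
    rw [show (ε * L / 2) ^ 2 = ε ^ 2 / 4 * (L : ℝ) ^ 2 by ring]
    refine rpow_three_halves_le_mul_sq (by positivity) ?_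
    calc (1 / (ε ^ 2 / 4) ^ 2 : ℝ) = 16 / ε ^ 4 := by ring
      _ ≤ (⌈16 / ε ^ 4⌉₊ : ℝ) := Nat.le_ceil _
      _ ≤ L := by exact_mod_cast hL
  have hcentre : ∀ m ∈ WL L N x, m ∈ sector L (midL L) (θ + ε) := fun m hm =>
    mem_sector_of_mem_WL hε hx h2N hNle (by rwa [hxn]) (by linarith) hm
  exact ⟨hcentre, fun m hm => droplet_subset_sector (by omega) (by linarith) (hcentre m hm)⟩

/-- For large `L`, configurations with `N/2 < n < N` particles inside `Λ_L` that are not too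
far from the droplet set have all closest-droplet centres in `𝒮_{L,M}(θ+ε)`, and the
corresponding droplets are contained in `𝒮_{L,M}(θ+2ε)`. -/
theorem closest_centres_in_sector (ε θ : ℝ)
    (hε : 0 < ε) (hε' : ε < 1 / 16) (hθ : ε < θ) (hθ' : θ < 1 / 16) :
    ∃ L₀ : ℕ, ∀ (L : ℕ) [NeZero L], L₀ ≤ L →
      ∀ n : ℕ, NL ε L < 2 * n → n < NL ε L →
      ∀ x : Finset (Fin L), x.card = NL ε L →
      (distDrop L (NL ε L) x : ℝ) < (L : ℝ) ^ ((3 : ℝ) / 2) →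
      (x ∩ secF L (midL L) θ).card = n →
      (∀ m ∈ WL L (NL ε L) x, m ∈ sector L (midL L) (θ + ε)) ∧
      (∀ m ∈ WL L (NL ε L) x, ∀ j ∈ droplet L (NL ε L) m,
        j ∈ sector L (midL L) (θ + 2 * ε)) :=
  closest_centres_in_sector_general ε θ hε hε'
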